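/- Let P ∈ ℤ[x] have degree d ≥ 2 and suppose P is injective on {1,...,N}. Let A_N = {P(1), ..., P(N)}. Then for every ε > 0, E(A_N) ≪_ε N^{2+ε}. -/

import Mathlib

/-!
For `x ≠ y` in `[1, N]`, `x - y` divides `n = P(x) - P(y)`, and once `s = x - y` is fixed, `y` is a
root of `P(X + s) - P(X) - n`, which is a nonzero polynomial of degree at most `d` because
`deg P ≥ 2`. So a nonzero `n` has at most `2 d τ(|n|)` representations, and the divisor bound with
`|n| ≪ N^d` makes this `≪_ε N^ε`. Finally `E(A) = ∑_{(e, b) ∈ A²} r(e - b, A)`, where the diagonal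
contributes at most `|A|²` and the off-diagonal at most `|A|² · max_{n ≠ 0} r(n, A)`.
-/

/-- The additive energy of a finite set `A ⊆ ℤ`. -/
def addEnergy (A : Finset ℤ) : ℕ :=
  ((A ×ˢ A ×ˢ A ×ˢ A).filter fun p => p.1 + p.2.1 = p.2.2.1 + p.2.2.2).card

open Finset hiding addEnergy

lemma add_one_le_rpow_of_two_rpow_inv_le {ε p : ℝ} (hε : 0 < ε) (hp : 2 ^ ε⁻¹ ≤ p) (e : ℕ) :
    (e + 1 : ℝ) ≤ (p ^ e) ^ ε := by
  have h2p : 2 ≤ p ^ ε := by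
    simpa [Real.rpow_inv_rpow zero_le_two hε.ne'] using
      Real.rpow_le_rpow (by positivity) hp hε.le
  have hp0 : 0 ≤ p := (Real.rpow_nonneg zero_le_two _).trans hp
  calc (e + 1 : ℝ) ≤ 2 ^ e := by exact_mod_cast Nat.lt_two_pow_self
    _ ≤ (p ^ ε) ^ e := pow_le_pow_left₀ zero_le_two h2p e
    _ = (p ^ e) ^ ε := by rw [← Real.rpow_mul_natCast hp0, mul_comm, Real.rpow_natCast_mul hp0]

lemma add_one_le_mul_rpow_of_two_le {ε p : ℝ} (hε : 0 < ε) (hp : 2 ≤ p) (e : ℕ) :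
    (e + 1 : ℝ) ≤ (1 + (ε * Real.log 2)⁻¹) * (p ^ e) ^ ε := by
  have hlog : 0 < ε * Real.log 2 := mul_pos hε (Real.log_pos one_lt_two)
  -- `2 ^ (e ε) = exp (e ε log 2)` dominates both `1` and `e ε log 2`
  have h1 : 1 ≤ (2 : ℝ) ^ (e * ε) := Real.one_le_rpow one_le_two (by positivity)
  have he : e * (ε * Real.log 2) ≤ (2 : ℝ) ^ (e * ε) := by
    rw [Real.rpow_def_of_pos two_pos]
    linarith [Real.add_one_le_exp (Real.log 2 * (e * ε))]
  have h2p : (2 : ℝ) ^ (e * ε) ≤ (p ^ e) ^ ε := by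
    rw [← Real.rpow_natCast_mul (by linarith)]
    exact Real.rpow_le_rpow zero_le_two hp (by positivity)
  have he' : (e : ℝ) ≤ (ε * Real.log 2)⁻¹ * 2 ^ (e * ε) := by
    rw [inv_mul_eq_div, le_div_iff₀ hlog]; exact he
  calc (e + 1 : ℝ) ≤ (1 + (ε * Real.log 2)⁻¹) * 2 ^ (e * ε) := by linarith
    _ ≤ _ := mul_le_mul_of_nonneg_left h2p (by positivity)

theorem Nat.exists_card_divisors_le_mul_rpow {ε : ℝ} (hε : 0 < ε) :
    ∃ C > 0, ∀ n : ℕ, n ≠ 0 → (#n.divisors : ℝ) ≤ C * n ^ ε := by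
  set c : ℝ := 1 + (ε * Real.log 2)⁻¹
  have hc : 1 ≤ c := le_add_of_nonneg_right (by positivity)
  set T : ℝ := 2 ^ ε⁻¹
  refine ⟨c ^ ⌈T⌉₊, by positivity, fun n hn => ?_⟩
  -- only the primes below `T` may need the factor `c`
  have hfactor : ∀ p ∈ n.primeFactors, (n.factorization p + 1 : ℝ) ≤
      (if (p : ℝ) < T then c else 1) * ((p : ℝ) ^ n.factorization p) ^ ε := by
    intro p hp
    have hp2 : (2 : ℝ) ≤ p := by exact_mod_cast (Nat.prime_of_mem_primeFactors hp).two_le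
    split_ifs with hpT
    · exact add_one_le_mul_rpow_of_two_le hε hp2 _
    · rw [one_mul]; exact add_one_le_rpow_of_two_rpow_inv_le hε (not_lt.mp hpT) _
  have hsmall : #(n.primeFactors.filter fun p : ℕ => (p : ℝ) < T) ≤ ⌈T⌉₊ :=
    (card_le_card fun p hp => mem_range.mpr (Nat.lt_ceil.mpr (mem_filter.mp hp).2)).trans
      (card_range _).le
  calc (#n.divisors : ℝ) = ∏ p ∈ n.primeFactors, (n.factorization p + 1 : ℝ) := by
        rw [Nat.card_divisors hn]; push_cast; rfl
    _ ≤ ∏ p ∈ n.primeFactors,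
          (if (p : ℝ) < T then c else 1) * ((p : ℝ) ^ n.factorization p) ^ ε :=
        prod_le_prod (fun _ _ => by positivity) hfactor
    _ = c ^ #(n.primeFactors.filter fun p : ℕ => (p : ℝ) < T) * n ^ ε := by
        rw [prod_mul_distrib, prod_ite, prod_const, prod_const_one, mul_one,
          Real.finsetProd_rpow _ _ (fun _ _ => by positivity)]
        congr 2
        exact_mod_cast (Nat.prod_primeFactors_pow_factorization hn).symm
    _ ≤ c ^ ⌈T⌉₊ * n ^ ε := by gcongr

namespace Polynomial

variable {R : Type*} [CommRing R] [IsDomain R] [CharZero R]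

theorem comp_X_add_C_sub_self_ne_C {P : R[X]} (hP : 2 ≤ P.natDegree) {s : R} (hs : s ≠ 0)
    (n : R) : P.comp (X + C s) - P ≠ C n := by
  -- otherwise `P (k s) = P 0 + k n` for every `k : ℕ`, so `P (s X)` would be linear
  intro h
  have hstep : ∀ x, P.eval (x + s) = P.eval x + n := fun x => by
    simpa [eval_comp, sub_eq_iff_eq_add'] using congrArg (eval x) h
  have hmul : ∀ k : ℕ, P.eval (k * s) = P.eval 0 + k * n := fun k => by
    induction k with
    | zero => simp
    | succ k ih => push_cast; rw [add_one_mul, hstep, ih]; ring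
  have hlin : P.comp (C s * X) = C n * X + C (P.eval 0) := by
    refine eq_of_infinite_eval_eq _ _ <|
      Set.infinite_of_injective_forall_mem Nat.cast_injective fun k : ℕ => ?_
    simp [eval_comp, mul_comm s, hmul, add_comm, mul_comm n]
  have hdeg := congrArg natDegree hlin
  rw [natDegree_comp, natDegree_C_mul_X _ hs, mul_one] at hdeg
  have hle := hdeg ▸ natDegree_linear_le (a := n) (b := P.eval 0)
  omega

theorem card_filter_eval_add_sub_eval_eq_le [DecidableEq R] (S : Finset R) {P : R[X]}
    (hP : 2 ≤ P.natDegree) {s : R} (hs : s ≠ 0) (n : R) :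
    #{y ∈ S | P.eval (y + s) - P.eval y = n} ≤ P.natDegree := by
  set Q := P.comp (X + C s) - P - C n
  have hQ : Q ≠ 0 := sub_ne_zero.mpr (comp_X_add_C_sub_self_ne_C hP hs n)
  have hsub : {y ∈ S | P.eval (y + s) - P.eval y = n} ⊆ Q.roots.toFinset := fun y hy => by
    rw [Multiset.mem_toFinset, mem_roots hQ]
    simpa [Q, eval_comp, sub_eq_zero] using (mem_filter.mp hy).2
  have hdeg : Q.natDegree ≤ P.natDegree := by
    have hcomp : (P.comp (X + C s)).natDegree = P.natDegree := by
      rw [natDegree_comp, natDegree_X_add_C, mul_one]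
    rw [natDegree_sub_C]
    simpa using natDegree_sub_le_of_le hcomp.le (le_refl P.natDegree)
  exact (card_le_card hsub).trans <|
    (Multiset.toFinset_card_le _).trans <| (card_roots' Q).trans hdeg

theorem card_filter_eval_sub_eval_eq_le (S : Finset ℤ) {P : ℤ[X]} (hP : 2 ≤ P.natDegree)
    {n : ℤ} (hn : n ≠ 0) :
    #{q ∈ S ×ˢ S | P.eval q.1 - P.eval q.2 = n} ≤ 2 * P.natDegree * #n.natAbs.divisors := by
  set F := {q ∈ S ×ˢ S | P.eval q.1 - P.eval q.2 = n}
  have himage : F.image (fun q => (q.1 - q.2).natAbs) ⊆ n.natAbs.divisors := by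
    intro m hm
    obtain ⟨q, hq, rfl⟩ := mem_image.mp hm
    refine Nat.mem_divisors.mpr ⟨Int.natAbs_dvd_natAbs.mpr ?_, Int.natAbs_ne_zero.mpr hn⟩
    exact (mem_filter.mp hq).2 ▸ sub_dvd_eval_sub q.1 q.2 P
  have hfiber : ∀ m ∈ F.image (fun q => (q.1 - q.2).natAbs),
      #{q ∈ F | (q.1 - q.2).natAbs = m} ≤ 2 * P.natDegree := by
    intro m hm
    have hm0 : (m : ℤ) ≠ 0 := by exact_mod_cast (Nat.pos_of_mem_divisors (himage hm)).ne'
    have hsub : {q ∈ F | (q.1 - q.2).natAbs = m} ⊆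
        ({y ∈ S | P.eval (y + (m : ℤ)) - P.eval y = n}.image fun y => (y + (m : ℤ), y)) ∪
        ({y ∈ S | P.eval (y + -(m : ℤ)) - P.eval y = n}.image fun y => (y + -(m : ℤ), y)) := by
      intro q hq
      simp only [F, mem_filter, mem_product] at hq
      obtain ⟨⟨⟨-, hq2⟩, hqn⟩, hqm⟩ := hq
      simp only [mem_union, mem_image, mem_filter]
      rcases Int.natAbs_eq (q.1 - q.2) with h | h <;> rw [hqm] at h
      · exact .inl ⟨q.2, ⟨hq2, by rwa [← h, add_sub_cancel]⟩, by ext <;> simp [← h]⟩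
      · exact .inr ⟨q.2, ⟨hq2, by rwa [← h, add_sub_cancel]⟩, by ext <;> simp [← h]⟩
    calc _ ≤ _ := card_le_card hsub
      _ ≤ _ := card_union_le _ _
      _ ≤ P.natDegree + P.natDegree := add_le_add
          (card_image_le.trans (card_filter_eval_add_sub_eval_eq_le S hP hm0 n))
          (card_image_le.trans (card_filter_eval_add_sub_eval_eq_le S hP (neg_ne_zero.mpr hm0) n))
      _ = 2 * P.natDegree := (two_mul _).symm
  calc #F ≤ 2 * P.natDegree * #(F.image fun q => (q.1 - q.2).natAbs) :=
        card_le_mul_card_image F _ hfiber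
    _ ≤ 2 * P.natDegree * #n.natAbs.divisors := by gcongr

theorem abs_eval_le {R : Type*} [CommRing R] [LinearOrder R] [IsStrictOrderedRing R] (P : R[X])
    {x M : R} (hM : 1 ≤ M) (hx : |x| ≤ M) :
    |P.eval x| ≤ (∑ i ∈ range (P.natDegree + 1), |P.coeff i|) * M ^ P.natDegree := by
  rw [eval_eq_sum_range, sum_mul]
  refine (abs_sum_le_sum_abs _ _).trans (sum_le_sum fun i hi => ?_)
  rw [abs_mul, abs_pow]
  gcongr
  calc |x| ^ i ≤ M ^ i := pow_le_pow_left₀ (abs_nonneg x) hx i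
    _ ≤ M ^ P.natDegree := pow_le_pow_right₀ hM (Nat.lt_succ_iff.mp (mem_range.mp hi))

end Polynomial

/-- The paper's `r(n, A)`. -/
def diffReps (A : Finset ℤ) (n : ℤ) : ℕ := #{q ∈ A ×ˢ A | q.1 - q.2 = n}

theorem diffReps_le_card (A : Finset ℤ) (n : ℤ) : diffReps A n ≤ #A :=
  card_le_card_of_injOn Prod.snd (fun q hq => (mem_product.mp (mem_filter.mp hq).1).2)
    fun q hq r hr h => by
      have := (mem_filter.mp hq).2; have := (mem_filter.mp hr).2
      ext <;> simp_all only [coe_filter, Set.mem_ofPred_eq]; omega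

theorem diffReps_image_le (S : Finset ℤ) (f : ℤ → ℤ) (n : ℤ) :
    diffReps (S.image f) n ≤ #{q ∈ S ×ˢ S | f q.1 - f q.2 = n} := by
  refine (card_le_card fun q hq => ?_).trans (card_image_le (f := Prod.map f f))
  obtain ⟨a, b⟩ := q
  simp only [mem_filter, mem_product, mem_image] at hq ⊢
  obtain ⟨⟨⟨x, hx, rfl⟩, ⟨y, hy, rfl⟩⟩, hxy⟩ := hq
  exact ⟨(x, y), ⟨⟨hx, hy⟩, hxy⟩, rfl⟩

-- `a + b = c + e` iff `a - c = e - b`: fibre the quadruples over `(e, b)`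
theorem addEnergy_eq_sum_diffReps (A : Finset ℤ) :
    addEnergy A = ∑ p ∈ A ×ˢ A, diffReps A (p.1 - p.2) := by
  rw [addEnergy, card_eq_sum_card_fiberwise (f := fun q => (q.2.2.2, q.2.1)) (t := A ×ˢ A)]
  · refine sum_congr rfl fun p hp => card_nbij' (fun q => (q.1, q.2.2.1))
      (fun r => (r.1, p.2, r.2, p.1)) ?_ ?_ ?_ ?_
    all_goals intro q hq; grind
  · intro q hq
    simp_all

theorem addEnergy_le_of_diffReps_le (A : Finset ℤ) {R : ℝ} (hR₀ : 0 ≤ R)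
    (hR : ∀ a ∈ A, ∀ b ∈ A, a ≠ b → (diffReps A (a - b) : ℝ) ≤ R) :
    (addEnergy A : ℝ) ≤ #A ^ 2 * (1 + R) := by
  have hdiag : ∑ p ∈ A.diag, (diffReps A (p.1 - p.2) : ℝ) ≤ #A ^ 2 := by
    calc _ ≤ #A.diag • (#A : ℝ) :=
          sum_le_card_nsmul _ _ _ fun p _ => by exact_mod_cast diffReps_le_card A _
      _ = #A ^ 2 := by rw [diag_card, nsmul_eq_mul, sq]
  have hoff : ∑ p ∈ A.offDiag, (diffReps A (p.1 - p.2) : ℝ) ≤ #A ^ 2 * R := by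
    refine (sum_le_card_nsmul _ _ R fun p hp => ?_).trans ?_
    · obtain ⟨ha, hb, hab⟩ := mem_offDiag.mp hp
      exact hR _ ha _ hb hab
    · rw [nsmul_eq_mul]
      gcongr
      rw [offDiag_card]
      exact_mod_cast (Nat.sub_le _ _).trans (sq _).ge
  calc (addEnergy A : ℝ) = ∑ p ∈ A.diag ∪ A.offDiag, (diffReps A (p.1 - p.2) : ℝ) := by
        rw [diag_union_offDiag, addEnergy_eq_sum_diffReps]; push_cast; rfl
    _ ≤ #A ^ 2 * (1 + R) := by
        rw [sum_union (disjoint_diag_offDiag A)]; linarith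

theorem exists_diffReps_image_eval_le (P : Polynomial ℤ) (hP : 2 ≤ P.natDegree) {ε : ℝ}
    (hε : 0 < ε) :
    ∃ K ≥ 0, ∀ N : ℕ, 1 ≤ N → ∀ a ∈ (Icc 1 (N : ℤ)).image P.eval,
      ∀ b ∈ (Icc 1 (N : ℤ)).image P.eval, a ≠ b →
        (diffReps ((Icc 1 (N : ℤ)).image P.eval) (a - b) : ℝ) ≤ K * N ^ ε := by
  set d := P.natDegree
  have hd : (0 : ℝ) < d := by exact_mod_cast (zero_lt_two.trans_le hP)
  obtain ⟨C, hC, hdiv⟩ := Nat.exists_card_divisors_le_mul_rpow (div_pos hε hd)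
  set H : ℤ := ∑ i ∈ range (d + 1), |P.coeff i|
  have hH : (0 : ℝ) ≤ 2 * H := by
    have : 0 ≤ H := sum_nonneg fun i _ => abs_nonneg _
    positivity
  refine ⟨2 * d * C * (2 * H : ℝ) ^ (ε / d), by positivity, fun N hN a ha b hb hab => ?_⟩
  have hbound : ∀ c ∈ (Icc 1 (N : ℤ)).image P.eval, |c| ≤ H * N ^ d := by
    intro c hc
    obtain ⟨x, hx, rfl⟩ := mem_image.mp hc
    rw [mem_Icc] at hx
    exact P.abs_eval_le (by exact_mod_cast hN) (abs_le.mpr ⟨by omega, hx.2⟩)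
  have hsize : |a - b| ≤ 2 * H * N ^ d :=
    (abs_sub _ _).trans (by linarith [hbound a ha, hbound b hb])
  have hab' : a - b ≠ 0 := sub_ne_zero.mpr hab
  calc (diffReps _ (a - b) : ℝ) ≤ 2 * d * #(a - b).natAbs.divisors := by
        exact_mod_cast (diffReps_image_le _ _ _).trans
          (Polynomial.card_filter_eval_sub_eval_eq_le _ hP hab')
    _ ≤ 2 * d * (C * ((a - b).natAbs : ℝ) ^ (ε / d)) := by
        gcongr; exact hdiv _ (Int.natAbs_ne_zero.mpr hab')
    _ ≤ 2 * d * (C * (2 * H * (N : ℝ) ^ d) ^ (ε / d)) := by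
        gcongr
        rw [Nat.cast_natAbs]
        exact_mod_cast hsize
    _ = 2 * d * C * (2 * H : ℝ) ^ (ε / d) * N ^ ε := by
        rw [Real.mul_rpow hH (by positivity), ← Real.rpow_natCast_mul (by positivity),
          mul_div_cancel₀ _ hd.ne']
        ring

theorem polynomial_energy_bound
    (P : Polynomial ℤ) (hd : 2 ≤ P.natDegree) :
    ∀ ε : ℝ, 0 < ε → ∃ C : ℝ, 0 < C ∧ ∀ N : ℕ, 1 ≤ N →
      Set.InjOn P.eval (Set.Icc (1:ℤ) N) →
      (addEnergy ((Finset.Icc (1:ℤ) N).image P.eval) : ℝ) ≤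
        C * (N : ℝ) ^ ((2:ℝ) + ε) := by
  intro ε hε
  obtain ⟨K, hK, hdiff⟩ := exists_diffReps_image_eval_le P hd hε
  refine ⟨1 + K, by positivity, fun N hN _ => ?_⟩
  have hcard : (#((Icc 1 (N : ℤ)).image P.eval) : ℝ) ≤ N := by
    exact_mod_cast card_image_le.trans (by simp)
  have hNε : 1 ≤ (N : ℝ) ^ ε := Real.one_le_rpow (by exact_mod_cast hN) hε.le
  calc (addEnergy ((Icc 1 (N : ℤ)).image P.eval) : ℝ)
      ≤ #((Icc 1 (N : ℤ)).image P.eval) ^ 2 * (1 + K * N ^ ε) :=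
        addEnergy_le_of_diffReps_le _ (by positivity) (hdiff N hN)
    _ ≤ N ^ 2 * ((1 + K) * N ^ ε) := by gcongr; nlinarith
    _ = (1 + K) * N ^ ((2 : ℝ) + ε) := by
        rw [Real.rpow_add (by exact_mod_cast hN), Real.rpow_two]; ring
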